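/- The Multiway Partitioning instance is feasible if and only if there exists a pivot a ∈ {p_1,…,p_n} such that the system mod-IP(a) has a feasible solution x ∈ {0,1}^{m×n}. -/

import Mathlib

/-- Feasibility of a Multiway Partitioning instance: a partition
`A_1 ∪̇ ⋯ ∪̇ A_m` of the jobs (encoded by an assignment `σ`) with
`∑_{j ∈ A_i} p_j = T_i` for every machine `i`. -/
def MultiwayFeasible (n m : ℕ) (p : Fin n → ℕ) (T : Fin m → ℕ) : Prop :=
  ∃ σ : Fin n → Fin m,
    ∀ i : Fin m, ∑ j ∈ Finset.univ.filter (fun j => σ j = i), p j = T i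

/-- Feasibility of the system mod-IP(a) in binary variables `x i j`.
Small machines are those with `T i < pmax ^ 4`, big machines the others. -/
def ModIPFeasible (n m : ℕ) (p : Fin n → ℕ) (T : Fin m → ℕ) (pmax a : ℕ) : Prop :=
  ∃ x : Fin m → Fin n → ℕ,
    (∀ i j, x i j ≤ 1) ∧
    (∀ i : Fin m, T i < pmax ^ 4 → ∑ j, p j * x i j = T i) ∧
    (∀ i : Fin m, pmax ^ 4 ≤ T i → ∑ j, p j * x i j ≡ T i [MOD a]) ∧
    (pmax ^ 2 * (Finset.univ.filter (fun i : Fin m => pmax ^ 4 ≤ T i)).card ≤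
      ∑ j ∈ Finset.univ.filter (fun j => p j = a),
        ∑ i ∈ Finset.univ.filter (fun i : Fin m => pmax ^ 4 ≤ T i), x i j) ∧
    (∀ j : Fin n, ∑ i, x i j = 1)

/-!
The indicator matrix of a feasible partition satisfies every constraint of mod-IP(a) except
possibly the pivot count. The big machines carry at least `pmax ^ 3` jobs each, so by pigeonhole
over the `pmax` possible job sizes some size `a` occurs at least `pmax ^ 2 * |B|` times among
them, and that `a` is a valid pivot.

Conversely, read a solution of mod-IP(a) as an assignment and set the pivot jobs on big machines
aside. The remaining loads are congruent to the targets modulo `a`. While some big machine is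
overloaded it holds at least `2a - 1` jobs, so by Erdős–Ginzburg–Ziv it contains `a` jobs of total
divisible by `a` and at most `a * pmax`; the reserve of pivot jobs guarantees a machine with a
deficit of at least `a * pmax`, and moving the block there keeps all congruences and lowers the
total overload. Once no machine is overloaded, every gap is a multiple of `a` and the gaps add up
to `a` times the number of pivot jobs, which are distributed to close them.
-/

open Finset

namespace MultiwayPartitioning

section Load

variable {ι κ : Type*} [DecidableEq κ] (p : ι → ℕ) (σ : ι → κ)

def load (s : Finset ι) (i : κ) : ℕ :=
  ∑ j ∈ s with σ j = i, p j

lemma load_union [DecidableEq ι] {s t : Finset ι} (h : Disjoint s t) (i : κ) :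
    load p σ (s ∪ t) i = load p σ s i + load p σ t i := by
  rw [load, filter_union, sum_union (disjoint_filter_filter h), load, load]

lemma load_congr {τ : ι → κ} {s : Finset ι} (h : ∀ j ∈ s, σ j = τ j) (i : κ) :
    load p σ s i = load p τ s i := by
  rw [load, load, filter_congr fun j hj => by rw [h j hj]]

lemma load_eq_zero {s : Finset ι} {i : κ} (h : ∀ j ∈ s, σ j ≠ i) : load p σ s i = 0 := by
  rw [load, filter_false_of_mem h, sum_empty]

lemma load_of_forall_eq {s : Finset ι} {c : κ} (h : ∀ j ∈ s, σ j = c) (i : κ) :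
    load p σ s i = if c = i then ∑ j ∈ s, p j else 0 := by
  split_ifs with hc
  · rw [load, filter_true_of_mem fun j hj => (h j hj).trans hc]
  · exact load_eq_zero p σ fun j hj => (h j hj).trans_ne hc

lemma load_of_forall_eq_const {s : Finset ι} {a : ℕ} (h : ∀ j ∈ s, p j = a) (i : κ) :
    load p σ s i = a * #{j ∈ s | σ j = i} := by
  rw [load, sum_congr rfl fun j hj => h j (mem_filter.1 hj).1, sum_const, smul_eq_mul, mul_comm]

lemma load_le_card_mul {K : ℕ} (h : ∀ j, p j ≤ K) (s : Finset ι) (i : κ) :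
    load p σ s i ≤ #{j ∈ s | σ j = i} * K :=
  sum_le_card_nsmul _ _ _ fun j _ => h j

lemma sum_load {s : Finset ι} {t : Finset κ} (h : ∀ j ∈ s, σ j ∈ t) :
    ∑ i ∈ t, load p σ s i = ∑ j ∈ s, p j :=
  sum_fiberwise_of_maps_to h p

lemma load_move [DecidableEq ι] {s Z : Finset ι} (hZ : Z ⊆ s) {i₀ : κ} (h : ∀ j ∈ Z, σ j = i₀)
    (i₁ i : κ) :
    load p (Z.piecewise (fun _ => i₁) σ) s i + (if i₀ = i then ∑ j ∈ Z, p j else 0) =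
      load p σ s i + (if i₁ = i then ∑ j ∈ Z, p j else 0) := by
  rw [← sdiff_union_of_subset hZ, load_union _ _ sdiff_disjoint, load_union _ _ sdiff_disjoint,
    load_congr p (Z.piecewise (fun _ => i₁) σ) (τ := σ)
      (fun j hj => piecewise_eq_of_notMem _ _ _ (mem_sdiff.1 hj).2),
    load_of_forall_eq p σ h,
    load_of_forall_eq p (Z.piecewise (fun _ => i₁) σ) fun j hj => piecewise_eq_of_mem _ _ _ hj]
  ring

end Load

section Rebalance

variable {ι κ : Type*} [DecidableEq ι] [DecidableEq κ] (p : ι → ℕ) (T : κ → ℕ) (J : Finset ι)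
  (B : Finset κ)

-- Truncated subtraction: only overloaded machines contribute.
def excess (σ : ι → κ) : ℕ :=
  ∑ i ∈ B, (load p σ J i - T i)

variable {p T J B} {a K : ℕ}

lemma exists_excess_lt (ha : 0 < a) (hpos : ∀ j, 0 < p j) (hle : ∀ j, p j ≤ K)
    (hT : ∀ i ∈ B, (2 * a - 1) * K ≤ T i) (hroom : ∑ j ∈ J, p j + a * (K * #B) ≤ ∑ i ∈ B, T i)
    {σ : ι → κ} (hσ : ∀ j ∈ J, σ j ∈ B) (hmod : ∀ i ∈ B, load p σ J i ≡ T i [MOD a])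
    {i₀ : κ} (hi₀ : i₀ ∈ B) (hover : T i₀ < load p σ J i₀) :
    ∃ τ : ι → κ, (∀ j ∉ J, τ j = σ j) ∧ (∀ j ∈ J, τ j ∈ B) ∧
      (∀ i ∈ B, load p τ J i ≡ T i [MOD a]) ∧ excess p T J B τ < excess p T J B σ := by
  obtain ⟨Z, hZ, hZcard, hZdvd⟩ : ∃ Z ⊆ {j ∈ J | σ j = i₀}, #Z = a ∧ a ∣ ∑ j ∈ Z, p j := by
    have hcard : 2 * a - 1 ≤ #{j ∈ J | σ j = i₀} := by
      have := load_le_card_mul p σ hle J i₀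
      have := hT i₀ hi₀
      by_contra! h
      have : #{j ∈ J | σ j = i₀} * K ≤ (2 * a - 1) * K := Nat.mul_le_mul_right K h.le
      omega
    obtain ⟨Z, hZ, hZcard, hZdvd⟩ := Int.erdos_ginzburg_ziv (fun j => (p j : ℤ)) hcard
    exact ⟨Z, hZ, hZcard, by exact_mod_cast hZdvd⟩
  have hZJ : Z ⊆ J := hZ.trans (filter_subset _ _)
  have hZσ : ∀ j ∈ Z, σ j = i₀ := fun j hj => (mem_filter.1 (hZ hj)).2
  have hs_pos : 0 < ∑ j ∈ Z, p j := sum_pos (fun j _ => hpos j) (card_pos.1 (hZcard ▸ ha))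
  have hs_le : ∑ j ∈ Z, p j ≤ a * K := hZcard ▸ sum_le_card_nsmul _ _ _ fun j _ => hle j
  obtain ⟨i₁, hi₁, hdeficit⟩ : ∃ i₁ ∈ B, load p σ J i₁ + a * K ≤ T i₁ := by
    refine exists_le_of_sum_le ⟨i₀, hi₀⟩ ?_
    rw [sum_add_distrib, sum_load p σ hσ, sum_const, smul_eq_mul]
    linarith
  have hne : i₀ ≠ i₁ := by rintro rfl; omega
  have hmove := load_move p σ hZJ hZσ i₁
  have hmove₀ := hmove i₀
  have hmove₁ := hmove i₁
  rw [if_pos rfl, if_neg hne.symm] at hmove₀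
  rw [if_neg hne, if_pos rfl] at hmove₁
  refine ⟨Z.piecewise (fun _ => i₁) σ, fun j hj => piecewise_eq_of_notMem _ _ _ fun h => hj (hZJ h),
    fun j hj => ?_, fun i hi => ?_, ?_⟩
  · by_cases hjZ : j ∈ Z
    · rwa [piecewise_eq_of_mem _ _ _ hjZ]
    · rw [piecewise_eq_of_notMem _ _ _ hjZ]; exact hσ j hj
  · have hzero : ∀ c : κ, (if c = i then ∑ j ∈ Z, p j else 0) ≡ 0 [MOD a] := fun c => by
      split_ifs
      exacts [Nat.modEq_zero_iff_dvd.2 hZdvd, rfl]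
    refine Nat.ModEq.add_right_cancel ((hzero i₀).trans (hzero i₁).symm) ?_
    rw [hmove i]
    exact (hmod i hi).add_right _
  · refine sum_lt_sum (fun i _ => ?_) ⟨i₀, hi₀, by omega⟩
    rcases eq_or_ne i₀ i with rfl | h₀
    · omega
    rcases eq_or_ne i₁ i with rfl | h₁
    · omega
    have := hmove i
    rw [if_neg h₀, if_neg h₁] at this
    omega

lemma exists_load_le (ha : 0 < a) (hpos : ∀ j, 0 < p j) (hle : ∀ j, p j ≤ K)
    (hT : ∀ i ∈ B, (2 * a - 1) * K ≤ T i) (hroom : ∑ j ∈ J, p j + a * (K * #B) ≤ ∑ i ∈ B, T i)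
    (σ : ι → κ) (hσ : ∀ j ∈ J, σ j ∈ B) (hmod : ∀ i ∈ B, load p σ J i ≡ T i [MOD a]) :
    ∃ τ : ι → κ, (∀ j ∉ J, τ j = σ j) ∧ (∀ j ∈ J, τ j ∈ B) ∧
      (∀ i ∈ B, load p τ J i ≡ T i [MOD a]) ∧ ∀ i ∈ B, load p τ J i ≤ T i := by
  induction hE : excess p T J B σ using Nat.strong_induction_on generalizing σ with
  | _ E ih =>
  by_cases hfit : ∀ i ∈ B, load p σ J i ≤ T i
  · exact ⟨σ, fun _ _ => rfl, hσ, hmod, hfit⟩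
  push Not at hfit
  obtain ⟨i₀, hi₀, hover⟩ := hfit
  obtain ⟨τ, hτJ, hτ, hτmod, hlt⟩ := exists_excess_lt ha hpos hle hT hroom hσ hmod hi₀ hover
  obtain ⟨υ, hυJ, hυ, hυmod, hυle⟩ := ih _ (hE ▸ hlt) τ hτ hτmod rfl
  exact ⟨υ, fun j hj => (hυJ j hj).trans (hτJ j hj), hυ, hυmod, hυle⟩

end Rebalance

lemma exists_card_fiber_eq_of_sum_eq {α β : Type*} [DecidableEq α] [DecidableEq β] (f : α → β)
    (d : β → ℕ) (t : Finset β) (s : Finset α) (hs : ∑ i ∈ t, d i = #s) :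
    ∃ g : α → β, (∀ x ∉ s, g x = f x) ∧ (∀ x ∈ s, g x ∈ t) ∧
      ∀ i ∈ t, #{x ∈ s | g x = i} = d i := by
  induction t using Finset.induction_on generalizing s with
  | empty =>
    obtain rfl : s = ∅ := card_eq_zero.1 (by simpa using hs.symm)
    exact ⟨f, fun _ _ => rfl, by simp, by simp⟩
  | insert b t hb ih =>
    rw [sum_insert hb] at hs
    obtain ⟨Q, hQs, hQ⟩ := exists_subset_card_eq (show d b ≤ #s by omega)
    obtain ⟨g, hgf, hgt, hgd⟩ := ih (s \ Q) (by rw [card_sdiff_of_subset hQs]; omega)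
    have hg_notMem : ∀ x ∈ s \ Q, g x ≠ b := fun x hx h => hb (h ▸ hgt x hx)
    refine ⟨Q.piecewise (fun _ => b) g, fun x hx => ?_, fun x hx => ?_, fun i hi => ?_⟩
    · rw [piecewise_eq_of_notMem _ _ _ fun h => hx (hQs h)]
      exact hgf x fun h => hx (mem_sdiff.1 h).1
    · by_cases hxQ : x ∈ Q
      · simp [hxQ]
      · rw [piecewise_eq_of_notMem _ _ _ hxQ]
        exact mem_insert_of_mem (hgt x (mem_sdiff.2 ⟨hx, hxQ⟩))
    · rcases mem_insert.1 hi with rfl | hit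
      · rw [← hQ]
        congr 1
        ext x
        by_cases hxQ : x ∈ Q
        · simp [hxQ, hQs hxQ]
        · simp only [mem_filter, piecewise_eq_of_notMem _ _ _ hxQ, hxQ, iff_false, not_and]
          exact fun hx => hg_notMem x (mem_sdiff.2 ⟨hx, hxQ⟩)
      · rw [← hgd i hit]
        congr 1
        ext x
        by_cases hxQ : x ∈ Q
        · simp [hxQ, show b ≠ i from fun h => hb (h ▸ hit)]
        · simp [hxQ]

section Fill

variable {ι κ : Type*} [DecidableEq ι] [DecidableEq κ] {p : ι → ℕ} {T : κ → ℕ} {B : Finset κ}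
  {a K : ℕ}

lemma exists_load_eq_on (ha : 0 < a) (hpos : ∀ j, 0 < p j) (hle : ∀ j, p j ≤ K)
    (hT : ∀ i ∈ B, (2 * a - 1) * K ≤ T i) {W : Finset ι} (hpiv : K * #B ≤ #{j ∈ W | p j = a})
    (hsum : ∑ j ∈ W, p j = ∑ i ∈ B, T i) {σ : ι → κ} (hσ : ∀ j ∈ W, σ j ∈ B)
    (hmod : ∀ i ∈ B, load p σ W i ≡ T i [MOD a]) :
    ∃ τ : ι → κ, (∀ j ∉ W, τ j = σ j) ∧ (∀ j ∈ W, τ j ∈ B) ∧ ∀ i ∈ B, load p τ W i = T i := by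
  set P := {j ∈ W | p j = a}
  set J := {j ∈ W | ¬p j = a}
  have hPJ : Disjoint P J := disjoint_filter_filter_not W W _
  have hW : W = P ∪ J := (filter_union_filter_not_eq (fun j => p j = a) W).symm
  have hPa : ∀ j ∈ P, p j = a := fun j hj => (mem_filter.1 hj).2
  have hsplit : ∀ (τ : ι → κ) (i : κ),
      load p τ W i = a * #{j ∈ P | τ j = i} + load p τ J i := fun τ i => by
    rw [hW, load_union p τ hPJ, load_of_forall_eq_const p τ hPa]
  have htotal : a * #P + ∑ j ∈ J, p j = ∑ i ∈ B, T i := by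
    rw [← hsum, hW, sum_union hPJ, sum_congr rfl hPa, sum_const, smul_eq_mul, mul_comm]
  obtain ⟨ρ, hρJ, hρ, hρmod, hρle⟩ := exists_load_le (J := J) ha hpos hle hT
    (by nlinarith [Nat.mul_le_mul_left a hpiv]) σ
    (fun j hj => hσ j (filter_subset _ _ hj))
    (fun i hi => Nat.ModEq.add_left_cancel (Nat.modEq_zero_iff_dvd.2 (dvd_mul_right a _))
      (by rw [zero_add, ← hsplit]; exact hmod i hi))
  have hdvd : ∀ i ∈ B, a ∣ T i - load p ρ J i := fun i hi =>
    (Nat.modEq_iff_dvd' (hρle i hi)).1 (hρmod i hi)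
  obtain ⟨g, hgP, hg, hgcard⟩ :=
    exists_card_fiber_eq_of_sum_eq ρ (fun i => (T i - load p ρ J i) / a) B P <| by
      refine Nat.eq_of_mul_eq_mul_left ha ?_
      rw [mul_sum, sum_congr rfl fun i hi => Nat.mul_div_cancel' (hdvd i hi),
        sum_tsub_distrib B hρle, sum_load p ρ hρ]
      omega
  refine ⟨g, fun j hj => ?_, fun j hj => ?_, fun i hi => ?_⟩
  · rw [hgP j fun h => hj (filter_subset _ _ h), hρJ j fun h => hj (filter_subset _ _ h)]
  · by_cases hjP : j ∈ P
    · exact hg j hjP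
    · rw [hgP j hjP]
      exact hρ j (by rw [hW] at hj; exact (mem_union.1 hj).resolve_left hjP)
  · rw [hsplit, load_congr p g (τ := ρ) fun j hj => hgP j (disjoint_right.1 hPJ hj), hgcard i hi,
      Nat.mul_div_cancel' (hdvd i hi)]
    exact Nat.sub_add_cancel (hρle i hi)

lemma exists_load_eq [Fintype ι] [Fintype κ] (ha : 0 < a) (hpos : ∀ j, 0 < p j)
    (hle : ∀ j, p j ≤ K) (hT : ∀ i ∈ B, (2 * a - 1) * K ≤ T i) (hsum : ∑ j, p j = ∑ i, T i)
    {σ : ι → κ} (hout : ∀ i ∉ B, load p σ univ i = T i)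
    (hin : ∀ i ∈ B, load p σ univ i ≡ T i [MOD a]) (hpiv : K * #B ≤ #{j | σ j ∈ B ∧ p j = a}) :
    ∃ τ : ι → κ, ∀ i, load p τ univ i = T i := by
  set W : Finset ι := {j | σ j ∈ B}
  have hσW : ∀ j ∈ W, σ j ∈ B := fun j hj => (mem_filter.1 hj).2
  have hσWc : ∀ j ∈ Wᶜ, σ j ∉ B := fun j hj h => mem_compl.1 hj (mem_filter.2 ⟨mem_univ j, h⟩)
  have hsplit : ∀ (τ : ι → κ) (i : κ), load p τ univ i = load p τ W i + load p τ Wᶜ i := by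
    intro τ i
    rw [← load_union p τ disjoint_compl_right, union_compl]
  have hσ_on : ∀ i ∈ B, load p σ W i = load p σ univ i := fun i hi => by
    rw [hsplit, load_eq_zero p σ fun j hj h => hσWc j hj (h ▸ hi), add_zero]
  have hsumW : ∑ j ∈ W, p j = ∑ i ∈ B, T i := by
    have hall : ∑ i ∈ Bᶜ, load p σ univ i + ∑ i ∈ B, load p σ univ i = ∑ i, load p σ univ i :=
      sum_compl_add_sum _ _
    rw [sum_load p σ fun j _ => mem_univ (σ j), hsum, ← sum_compl_add_sum B T,
      sum_congr rfl fun i hi => hout i (mem_compl.1 hi)] at hall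
    calc ∑ j ∈ W, p j = ∑ i ∈ B, load p σ W i := (sum_load p σ hσW).symm
      _ = ∑ i ∈ B, load p σ univ i := sum_congr rfl hσ_on
      _ = ∑ i ∈ B, T i := add_left_cancel hall
  obtain ⟨τ, hτW, hτ, hτeq⟩ := exists_load_eq_on ha hpos hle hT (W := W)
    (by rwa [filter_filter]) hsumW hσW fun i hi => by rw [hσ_on i hi]; exact hin i hi
  refine ⟨τ, fun i => ?_⟩
  rw [hsplit, load_congr p τ (τ := σ) fun j hj => hτW j (mem_compl.1 hj)]
  by_cases hi : i ∈ B
  · rw [hτeq i hi, load_eq_zero p σ fun j hj h => hσWc j hj (h ▸ hi), add_zero]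
  · rw [load_eq_zero p τ (i := i) fun j hj h => hi (h ▸ hτ j hj), zero_add, ← hout i hi, hsplit σ,
      load_eq_zero p σ (i := i) fun j hj h => hi (h ▸ hσW j hj), zero_add]

end Fill

lemma exists_eq_ite_of_sum_eq_one {ι κ : Type*} [Fintype κ] [DecidableEq κ] {x : κ → ι → ℕ}
    (hx : ∀ i j, x i j ≤ 1) (hcol : ∀ j, ∑ i, x i j = 1) :
    ∃ σ : ι → κ, x = fun i j => if σ j = i then 1 else 0 := by
  choose σ _ hσ using fun j => exists_ne_zero_of_sum_ne_zero (s := univ) (f := fun i => x i j)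
    (by rw [hcol j]; exact one_ne_zero)
  refine ⟨σ, funext₂ fun i j => ?_⟩
  have := hσ j
  split_ifs with h
  · have := hx i j
    subst h
    omega
  · have := add_le_sum (f := fun i => x i j) (fun _ _ => Nat.zero_le _) (mem_univ i)
      (mem_univ (σ j)) (Ne.symm h)
    have := hcol j
    omega

lemma modIPFeasible_iff {n m : ℕ} {p : Fin n → ℕ} {T : Fin m → ℕ} {pmax a : ℕ} :
    ModIPFeasible n m p T pmax a ↔ ∃ σ : Fin n → Fin m,
      (∀ i, T i < pmax ^ 4 → load p σ univ i = T i) ∧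
      (∀ i, pmax ^ 4 ≤ T i → load p σ univ i ≡ T i [MOD a]) ∧
      pmax ^ 2 * #{i | pmax ^ 4 ≤ T i} ≤ #{j | pmax ^ 4 ≤ T (σ j) ∧ p j = a} := by
  have hrow : ∀ (σ : Fin n → Fin m) (i : Fin m),
      ∑ j, p j * (if σ j = i then 1 else 0) = load p σ univ i := by
    intro σ i
    simp [load, sum_filter]
  have hcount : ∀ σ : Fin n → Fin m,
      ∑ j with p j = a, ∑ i with pmax ^ 4 ≤ T i, (if σ j = i then 1 else 0) =
        #{j | pmax ^ 4 ≤ T (σ j) ∧ p j = a} := by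
    intro σ
    simp [filter_filter, and_comm]
  constructor
  · rintro ⟨x, hx, hsmall, hbig, hpiv, hcol⟩
    obtain ⟨σ, rfl⟩ := exists_eq_ite_of_sum_eq_one hx hcol
    exact ⟨σ, fun i hi => hrow σ i ▸ hsmall i hi, fun i hi => hrow σ i ▸ hbig i hi, hcount σ ▸ hpiv⟩
  · rintro ⟨σ, hsmall, hbig, hpiv⟩
    refine ⟨fun i j => if σ j = i then 1 else 0, fun i j => by dsimp only; split_ifs <;> simp,
      fun i hi => (hrow σ i).trans (hsmall i hi), fun i hi => (hrow σ i).symm ▸ hbig i hi,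
      (hcount σ).symm ▸ hpiv, fun j => by simp⟩

section Pigeonhole

variable {ι κ : Type*} [Fintype ι] {p : ι → ℕ} {K : ℕ}

lemma mul_card_le_card_preimage [DecidableEq κ] (hK : 0 < K) (hle : ∀ j, p j ≤ K) (σ : ι → κ)
    {B : Finset κ} {L : ℕ} (hB : ∀ i ∈ B, K * L ≤ load p σ univ i) :
    L * #B ≤ #{j | σ j ∈ B} := by
  refine Nat.le_of_mul_le_mul_left ?_ hK
  calc K * (L * #B) = #B • (K * L) := by rw [smul_eq_mul]; ring
    _ ≤ ∑ i ∈ B, load p σ univ i := card_nsmul_le_sum _ _ _ hB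
    _ = ∑ j with σ j ∈ B, p j := sum_fiberwise_eq_sum_filter _ _ _ _
    _ ≤ #{j | σ j ∈ B} • K := sum_le_card_nsmul _ _ _ fun j _ => hle j
    _ = K * #{j | σ j ∈ B} := by rw [smul_eq_mul, mul_comm]

lemma exists_le_card_filter_eq [Nonempty ι] (hpos : ∀ j, 0 < p j) (hle : ∀ j, p j ≤ K)
    {W : Finset ι} {N : ℕ} (hW : K * N ≤ #W) : ∃ j, N ≤ #{j' ∈ W | p j' = p j} := by
  have hcard : #(univ.image p) ≤ K :=
    (card_le_card (image_subset_iff.2 fun j _ => mem_Icc.2 ⟨hpos j, hle j⟩)).trans (by simp)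
  obtain ⟨v, hv, hN⟩ := exists_le_card_fiber_of_mul_le_card_of_maps_to
    (fun j _ => mem_image_of_mem p (mem_univ j)) (univ_nonempty.image p)
    ((Nat.mul_le_mul_right N hcard).trans hW)
  obtain ⟨j, -, rfl⟩ := mem_image.1 hv
  exact ⟨j, hN⟩

lemma exists_pivot_of_load_eq [Nonempty ι] [Fintype κ] [DecidableEq κ] {T : κ → ℕ}
    (hpos : ∀ j, 0 < p j) (hle : ∀ j, p j ≤ K) {σ : ι → κ} (hσ : ∀ i, load p σ univ i = T i) :
    ∃ j, K ^ 2 * #{i | K ^ 4 ≤ T i} ≤ #{j' | K ^ 4 ≤ T (σ j') ∧ p j' = p j} := by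
  have hK : 0 < K := (hpos (Classical.arbitrary ι)).trans_le (hle _)
  have hjobs := mul_card_le_card_preimage hK hle σ (L := K ^ 3) (B := {i | K ^ 4 ≤ T i})
    fun i hi => by rw [← pow_succ', hσ i]; exact (mem_filter.1 hi).2
  obtain ⟨j, hj⟩ := exists_le_card_filter_eq (N := K ^ 2 * #{i | K ^ 4 ≤ T i}) hpos hle
    ((Nat.le_of_eq (by ring)).trans hjobs)
  exact ⟨j, by simpa only [filter_filter, mem_filter, mem_univ, true_and] using hj⟩

end Pigeonhole

lemma two_mul_sub_one_mul_le_pow_four {a K : ℕ} (ha : a ≤ K) : (2 * a - 1) * K ≤ K ^ 4 := by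
  have : 2 * a - 1 ≤ K ^ 3 := by
    have : 2 * K ≤ K ^ 3 + 1 := by nlinarith [Nat.le_self_pow two_ne_zero K]
    omega
  calc (2 * a - 1) * K ≤ K ^ 3 * K := Nat.mul_le_mul_right _ this
    _ = K ^ 4 := by ring

end MultiwayPartitioning

open MultiwayPartitioning

/-- The Multiway Partitioning instance is feasible if and only if there exists
a pivot `a ∈ {p_1,…,p_n}` such that mod-IP(a) is feasible. -/
theorem multiway_feasible_iff_exists_pivot_modIP_feasible
    (n m : ℕ) (hm : 1 ≤ m) (hmn : m ≤ n)
    (p : Fin n → ℕ) (hp : ∀ j, 0 < p j)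
    (T : Fin m → ℕ)
    (hsum : ∑ j, p j = ∑ i, T i)
    (pmax : ℕ) (hpmax : pmax = Finset.univ.sup p) :
    MultiwayFeasible n m p T ↔
      ∃ a : ℕ, (∃ j : Fin n, p j = a) ∧ ModIPFeasible n m p T pmax a := by
  have hle : ∀ j, p j ≤ pmax := fun j => hpmax ▸ le_sup (mem_univ j)
  have : Nonempty (Fin n) := ⟨⟨0, by omega⟩⟩
  simp only [modIPFeasible_iff]
  constructor
  · rintro ⟨σ, hσ⟩
    obtain ⟨j, hj⟩ := exists_pivot_of_load_eq hp hle hσ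
    exact ⟨p j, ⟨j, rfl⟩, σ, fun i _ => hσ i, fun i _ => (hσ i).symm ▸ rfl, hj⟩
  · rintro ⟨_, ⟨j₀, rfl⟩, σ, hsmall, hbig, hpiv⟩
    refine exists_load_eq (B := {i | pmax ^ 4 ≤ T i}) (hp j₀) hp hle
      (fun i hi => (two_mul_sub_one_mul_le_pow_four (hle j₀)).trans (mem_filter.1 hi).2) hsum
      (fun i hi => hsmall i (by simpa using hi)) (fun i hi => hbig i (by simpa using hi)) ?_
    calc pmax * #{i | pmax ^ 4 ≤ T i} ≤ pmax ^ 2 * #{i | pmax ^ 4 ≤ T i} :=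
          Nat.mul_le_mul_right _ (Nat.le_self_pow two_ne_zero _)
      _ ≤ _ := hpiv
      _ = _ := by simp
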